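/- Let X be a finite pure simplicial complex of dimension at least 2, let G be a group acting on a finite nonempty set S with Fix_G(S)<|S|, assume C¹(X;G)∖Z¹(X;G) is nonempty and h₁(X;G)>0. Then for every φ ∈ C¹(X;G) there exists ψ ∈ Z¹(X;G) such that dist(φ,ψ) ≤ m_f(Y_φ) / ((1 − Fix_G(S)/|S|)·h₁(X;G)), where f:Y_φ→X is the projection map. -/

import Mathlib

open Finset

variable {V : Type*} [DecidableEq V]

/-- A finite abstract simplicial complex on vertex type `V`. -/
structure SComplex (V : Type*) [DecidableEq V] where
  faces : Finset (Finset V)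
  nonempty_of_mem : ∀ σ ∈ faces, σ.Nonempty
  down_closed : ∀ σ ∈ faces, ∀ τ ⊆ σ, τ.Nonempty → τ ∈ faces

namespace SComplex

/-- The set `X(k)` of `k`-dimensional simplices (cardinality `k+1`). -/
def simps (X : SComplex V) (k : ℕ) : Finset (Finset V) :=
  X.faces.filter fun σ => σ.card = k + 1

/-- The number of vertices of a top-dimensional face. -/
def rank (X : SComplex V) : ℕ := X.faces.sup Finset.card

/-- The weight `c_X(σ)`. -/
noncomputable def weight (X : SComplex V) (σ : Finset V) : ℝ :=
  (((X.simps (X.rank - 1)).filter fun τ => σ ⊆ τ).card : ℝ) /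
    ((X.rank.choose σ.card) * ((X.simps (X.rank - 1)).card))

/-- `X` is pure of dimension `n-1` : every face is contained in a face with `n` vertices. -/
def IsPureOfRank (X : SComplex V) (n : ℕ) : Prop :=
  X.faces.Nonempty ∧ ∀ σ ∈ X.faces, ∃ τ ∈ X.faces, σ ⊆ τ ∧ τ.card = n

/-- The link `lk(X,σ)`. -/
def lk (X : SComplex V) (σ : Finset V) : SComplex V where
  faces := X.faces.filter fun η => η ∪ σ ∈ X.faces ∧ Disjoint η σ
  nonempty_of_mem := fun η hη => X.nonempty_of_mem η (mem_filter.mp hη).1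
  down_closed := by
    intro η hη τ hτη hτ
    rw [mem_filter] at hη ⊢
    refine ⟨X.down_closed η hη.1 τ hτη hτ,
      X.down_closed (η ∪ σ) hη.2.1 (τ ∪ σ) (union_subset_union_left hτη) ?_,
      hη.2.2.mono_left hτη⟩
    exact hτ.mono subset_union_left

/-- The star `st(X,σ)`. -/
def star (X : SComplex V) (σ : Finset V) : Finset (Finset V) :=
  X.faces.filter fun τ => τ ∪ σ ∈ X.faces

/-- The vertices of `X`. -/
def verts (X : SComplex V) [Fintype V] : Finset V :=
  Finset.univ.filter fun v => ({v} : Finset V) ∈ X.faces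

end SComplex
section Cochains

variable {G : Type*} [Group G]

/-- `φ ∈ C¹(X;G)`: an antisymmetric `G`-valued function on ordered pairs. -/
def IsCochain (G : Type*) [Group G] (φ : V → V → G) : Prop :=
  ∀ u v : V, φ u v = (φ v u)⁻¹

/-- The coboundary `d₁φ(u,v,w) = φ(u,v)φ(v,w)φ(w,u)`. -/
def d1 (φ : V → V → G) (u v w : V) : G := φ u v * φ v w * φ w u

/-- `φ ∈ Z¹(X;G)`: a cochain all of whose triangle equations hold. -/
def IsCocycle (X : SComplex V) (φ : V → V → G) : Prop :=
  IsCochain G φ ∧ ∀ u v w : V, ({u, v, w} : Finset V) ∈ X.simps 2 → d1 φ u v w = 1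

open Classical in
/-- The norm `‖φ‖`: total weight of the support of `φ`. -/
noncomputable def norm1 (X : SComplex V) (φ : V → V → G) : ℝ :=
  ∑ e ∈ (X.simps 1).filter (fun e => ∃ u v : V, e = {u, v} ∧ φ u v ≠ 1), X.weight e

open Classical in
/-- The norm `‖d₁φ‖`: total weight of the 2-simplices whose equation is violated. -/
noncomputable def normD1 (X : SComplex V) (φ : V → V → G) : ℝ :=
  ∑ τ ∈ (X.simps 2).filter (fun τ => ∃ u v w : V, τ = {u, v, w} ∧ d1 φ u v w ≠ 1), X.weight τ

/-- `dist(φ,ψ) = ‖φψ⁻¹‖`. -/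
noncomputable def dist1 (X : SComplex V) (φ ψ : V → V → G) : ℝ :=
  norm1 X (fun u v => φ u v * (ψ u v)⁻¹)

/-- The cosystolic norm `‖φ‖_csy`: the distance from `φ` to `Z¹(X;G)`. -/
noncomputable def csyNorm (X : SComplex V) (φ : V → V → G) : ℝ :=
  sInf {d : ℝ | ∃ ψ : V → V → G, IsCocycle X ψ ∧ d = dist1 X φ ψ}

/-- The cosystolic expansion `h₁(X;G)`. -/
noncomputable def h1 (X : SComplex V) (G : Type*) [Group G] : ℝ :=
  sInf {r : ℝ | ∃ φ : V → V → G, IsCochain G φ ∧ ¬ IsCocycle X φ ∧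
    r = normD1 X φ / csyNorm X φ}

end Cochains

section Fix

variable (G : Type*) [Group G] (S : Type*) [Fintype S] [MulAction G S]

open Classical in
/-- `fix(g) = |{s ∈ S : g•s = s}|`. -/
noncomputable def fixCard (g : G) : ℕ :=
  (Finset.univ.filter fun s : S => g • s = s).card

/-- `Fix_G(S) = max_{g ≠ 1} fix(g)`. -/
noncomputable def FixG : ℕ :=
  sSup {k : ℕ | ∃ g : G, g ≠ 1 ∧ fixCard G S g = k}

end Fix
section Ycomplex

variable {G : Type*} [Group G] {S : Type*} [Fintype S] [DecidableEq S] [MulAction G S]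
variable [Fintype V]

open Classical in
/-- The complex `Y_φ` associated to a cochain `φ`, together with the projection
`Prod.fst : Y_φ → X`. -/
noncomputable def Ycomplex (X : SComplex V) (φ : V → V → G) (S : Type*)
    [Fintype S] [DecidableEq S] [MulAction G S] : SComplex (V × S) where
  faces := Finset.univ.filter fun σ : Finset (V × S) =>
    σ.image Prod.fst ∈ X.faces ∧ (σ.image Prod.fst).card = σ.card ∧
    ∀ p ∈ σ, ∀ q ∈ σ, p.1 ≠ q.1 → p.2 = φ p.1 q.1 • q.2
  nonempty_of_mem := by
    intro σ hσ
    rw [Finset.mem_filter] at hσ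
    exact Finset.image_nonempty.mp (X.nonempty_of_mem _ hσ.2.1)
  down_closed := by
    intro σ hσ τ hτσ hτ
    rw [Finset.mem_filter] at hσ ⊢
    obtain ⟨-, h1, h2, h3⟩ := hσ
    refine ⟨Finset.mem_univ _,
      X.down_closed _ h1 _ (Finset.image_subset_image hτσ) (Finset.image_nonempty.mpr hτ),
      ?_, fun p hp q hq => h3 p (hτσ hp) q (hτσ hq)⟩
    exact Finset.card_image_iff.mpr ((Finset.card_image_iff.mp h2).mono hτσ)

end Ycomplex

section Deficiency

variable {W : Type*} [DecidableEq W] [Fintype W] [Fintype V]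

open Classical in
/-- `D_f(ut)`: the edges in the link of `f(ut)` that are not covered by the image of the
link of `ut`. -/
noncomputable def Dset (Y : SComplex W) (X : SComplex V) (f : W → V) (ut : W) :
    Finset (Finset V) :=
  ((X.lk {f ut}).simps 1).filter fun e => ¬ ∃ η ∈ (Y.lk {ut}).faces, η.image f = e

/-- The local deficiency `μ_f(ut)`. -/
noncomputable def locDef (Y : SComplex W) (X : SComplex V) (f : W → V) (ut : W) : ℝ :=
  ∑ e ∈ Dset Y X f ut, (X.lk {f ut}).weight e

open Classical in
/-- The deficiency `m_f(Y)` of a map `f : Y → X`. -/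
noncomputable def deficiency (Y : SComplex W) (X : SComplex V) (f : W → V) : ℝ :=
  ∑ u ∈ X.verts, (X.weight {u} / ((Y.verts.filter fun w => f w = u).card : ℝ)) *
    ∑ ut ∈ Y.verts.filter (fun w => f w = u), locDef Y X f ut

end Deficiency
section MapOver

variable [Fintype V]

/-- An element of `M(X;G,S)`: a surjective simplicial `|S|`-to-`1` map onto `X` whose
vertex fibers are identified with `S` and whose edge fibers are matchings given by the
action of elements of `G`. -/
structure MapOver (X : SComplex V) (G : Type*) (S : Type*) [Group G] [Fintype S]
    [DecidableEq S] [MulAction G S] [Fintype V] where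
  Y : SComplex (V × S)
  simplicial : ∀ τ ∈ Y.faces, τ.image Prod.fst ∈ X.faces
  injOnFaces : ∀ τ ∈ Y.faces, (τ.image Prod.fst).card = τ.card
  surj : ∀ σ ∈ X.faces, ∃ τ ∈ Y.faces, τ.image Prod.fst = σ
  fiber : ∀ p : V × S, ({p} : Finset (V × S)) ∈ Y.faces ↔ ({p.1} : Finset V) ∈ X.faces
  edges : ∀ u v : V, ({u, v} : Finset V) ∈ X.simps 1 → ∃ g : G,
    ∀ s t : S, (({(u, s), (v, t)} : Finset (V × S)) ∈ Y.faces ↔ s = g • t)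

variable {G : Type*} [Group G] {S : Type*} [Fintype S] [DecidableEq S] [MulAction G S]

open Classical in
/-- The set of edges of `Y` lying over a given edge of the base. -/
noncomputable def edgeFiber (Y : SComplex (V × S)) (e : Finset V) :
    Finset (Finset (V × S)) :=
  (Y.simps 1).filter fun e' => e'.image Prod.fst = e

open Classical in
/-- The distance between two elements of `M(X;G,S)`: the weight of the set of edges of
`X` over which the two edge fibers differ. -/
noncomputable def mdist (X : SComplex V) (M₁ M₂ : MapOver X G S) : ℝ :=
  ∑ e ∈ (X.simps 1).filter (fun e => edgeFiber M₁.Y e ≠ edgeFiber M₂.Y e), X.weight e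

/-- The distance from an element of `M(X;G,S)` to the set `M₀(X;G,S)` of genuine covers. -/
noncomputable def distToCovers (X : SComplex V) (M : MapOver X G S) : ℝ :=
  sInf {d : ℝ | ∃ M' : MapOver X G S, deficiency M'.Y X Prod.fst = 0 ∧ d = mdist X M M'}

/-- The `(G,S)`-cover-stability `c(X;G,S)`. -/
noncomputable def coverStability (X : SComplex V) (G : Type*) (S : Type*) [Group G]
    [Fintype S] [DecidableEq S] [MulAction G S] : ℝ :=
  sInf {r : ℝ | ∃ M : MapOver X G S, deficiency M.Y X Prod.fst ≠ 0 ∧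
    r = deficiency M.Y X Prod.fst / distToCovers X M}

end MapOver
section Paths

/-- A (possibly closed) edge path in a complex: consecutive vertices span edges. -/
def IsEdgePath (K : SComplex V) (p : List V) : Prop :=
  (∀ v ∈ p, ({v} : Finset V) ∈ K.faces) ∧
    p.Chain' fun u v => ({u, v} : Finset V) ∈ K.faces

/-- Combinatorial homotopy of edge paths, generated by erasing repetitions and by
collapsing across simplices. -/
inductive Homotopic (K : SComplex V) : List V → List V → Prop
  | refl (p : List V) : Homotopic K p p
  | symm {p q : List V} : Homotopic K p q → Homotopic K q p
  | trans {p q r : List V} : Homotopic K p q → Homotopic K q r → Homotopic K p r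
  | collapse (p q : List V) (a b c : V) (h : ({a, b, c} : Finset V) ∈ K.faces) :
      Homotopic K (p ++ a :: b :: c :: q) (p ++ a :: c :: q)
  | dedup (p q : List V) (a : V) : Homotopic K (p ++ a :: a :: q) (p ++ a :: q)

/-- `K` is connected: any two vertices are joined by an edge path. -/
def SComplexConnected (K : SComplex V) : Prop :=
  ∀ u v : V, ({u} : Finset V) ∈ K.faces → ({v} : Finset V) ∈ K.faces →
    ∃ p : List V, IsEdgePath K p ∧ p.head? = some u ∧ p.getLast? = some v

/-- `K` is simply connected: connected, and every closed edge path is null-homotopic. -/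
def SimplyConnected (K : SComplex V) : Prop :=
  SComplexConnected K ∧
    ∀ (p : List V) (a : V), IsEdgePath K p → p.head? = some a → p.getLast? = some a →
      Homotopic K p [a]

end Paths

section OrderComplex

open Classical in
/-- The order complex of `L ∖ {⊥, ⊤}`: simplices are the nonempty chains avoiding
`⊥` and `⊤`. -/
noncomputable def orderComplex (L : Type*) [Lattice L] [BoundedOrder L] [Fintype L]
    [DecidableEq L] : SComplex L where
  faces := Finset.univ.filter fun σ : Finset L =>
    σ.Nonempty ∧ (∀ x ∈ σ, x ≠ ⊥ ∧ x ≠ ⊤) ∧ ∀ x ∈ σ, ∀ y ∈ σ, x ≤ y ∨ y ≤ x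
  nonempty_of_mem := fun σ hσ => (Finset.mem_filter.mp hσ).2.1
  down_closed := by
    intro σ hσ τ hτσ hτ
    rw [Finset.mem_filter] at hσ ⊢
    exact ⟨Finset.mem_univ _, hτ, fun x hx => hσ.2.2.1 x (hτσ hx),
      fun x hx y hy => hσ.2.2.2 x (hτσ hx) y (hτσ hy)⟩

end OrderComplex
section Building

variable (F : Type*) [Field F] [Fintype F]

noncomputable instance : Fintype (Submodule F (Fin 4 → F)) := by
  have : Finite (Submodule F (Fin 4 → F)) :=
    Finite.of_injective (fun N => (N : Set (Fin 4 → F))) SetLike.coe_injective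
  exact Fintype.ofFinite _

noncomputable instance : DecidableEq (Submodule F (Fin 4 → F)) := Classical.decEq _

/-- The spherical building `A₃(F_q)`: the order complex of the poset of nontrivial proper
linear subspaces of `F_q⁴`. -/
noncomputable def A3 : SComplex (Submodule F (Fin 4 → F)) :=
  orderComplex (Submodule F (Fin 4 → F))

end Building
section FixEdge

variable {G : Type*} [Group G]

open Classical in
/-- The value `fix(d₁φ(u,v₁,v₂))` for an unordered edge `e = {v₁,v₂}` of the link of `u`
(well defined for cochains, since `fix` is invariant under inversion and conjugation). -/
noncomputable def fixEdge (S : Type*) [Fintype S] [MulAction G S] (φ : V → V → G)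
    (u : V) (e : Finset V) : ℕ :=
  sSup {k : ℕ | ∃ v₁ ∈ e, ∃ v₂ ∈ e, v₁ ≠ v₂ ∧ k = fixCard G S (d1 φ u v₁ v₂)}

end FixEdge

/-!
Over a triangle `τ = {u,v,w}` with `g = d₁φ(u,v,w) ≠ 1`, the edge `{v,w}` of `lk(X,u)` lifts to
the link of `[u,s]` in `Y_φ` exactly when `g • s = s`, so it is missing for at least
`|S| - Fix_G(S)` of the `|S|` lifts of `u`. Since `c_X(u) · c_{lk(X,u)}(τ ∖ u) = c_X(τ)/3` in a
pure complex, summing these defects with weights `c_X(u)/|S|` over the three vertices of each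
violated triangle gives `m_f(Y_φ) ≥ (1 - Fix_G(S)/|S|) · ‖d₁φ‖`. Finally
`‖d₁φ‖ ≥ h₁(X;G) · ‖φ‖_csy = h₁(X;G) · dist(φ,ψ)` for a cocycle `ψ` nearest to `φ`.
-/

namespace SComplex

lemma weight_nonneg (X : SComplex V) (σ : Finset V) : 0 ≤ X.weight σ := by
  unfold weight
  positivity

lemma mem_simps {X : SComplex V} {k : ℕ} {σ : Finset V} :
    σ ∈ X.simps k ↔ σ ∈ X.faces ∧ σ.card = k + 1 :=
  mem_filter

lemma mem_verts [Fintype V] {X : SComplex V} {u : V} : u ∈ X.verts ↔ {u} ∈ X.faces := by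
  simp [verts]

lemma singleton_mem_faces {X : SComplex V} {σ : Finset V} (hσ : σ ∈ X.faces) {u : V}
    (hu : u ∈ σ) : {u} ∈ X.faces :=
  X.down_closed σ hσ {u} (singleton_subset_iff.mpr hu) (singleton_nonempty u)

lemma mem_lk_singleton {X : SComplex V} {u : V} {η : Finset V} :
    η ∈ (X.lk {u}).faces ↔ η ∈ X.faces ∧ insert u η ∈ X.faces ∧ u ∉ η := by
  simp [lk, union_singleton, disjoint_singleton_right]

lemma erase_mem_lk {X : SComplex V} {τ : Finset V} (hτ : τ ∈ X.faces) {u : V} (hu : u ∈ τ)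
    (hne : (τ.erase u).Nonempty) : τ.erase u ∈ (X.lk {u}).faces :=
  mem_lk_singleton.mpr ⟨X.down_closed τ hτ _ (erase_subset u τ) hne,
    by rwa [insert_erase hu], notMem_erase u τ⟩

lemma IsPureOfRank.rank_eq {X : SComplex V} {n : ℕ} (h : X.IsPureOfRank n) : X.rank = n := by
  obtain ⟨⟨σ, hσ⟩, hpure⟩ := h
  refine le_antisymm (Finset.sup_le fun τ hτ => ?_) ?_
  · obtain ⟨τ', -, hsub, hcard⟩ := hpure τ hτ
    exact hcard ▸ card_le_card hsub
  · obtain ⟨τ', hτ', -, hcard⟩ := hpure σ hσ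
    exact hcard ▸ le_sup hτ'

lemma IsPureOfRank.exists_top_superset {X : SComplex V} {n : ℕ} (h : X.IsPureOfRank n)
    {σ : Finset V} (hσ : σ ∈ X.faces) : ∃ τ ∈ X.simps (n - 1), σ ⊆ τ := by
  obtain ⟨τ, hτ, hsub, hcard⟩ := h.2 σ hσ
  have : 0 < n := hcard ▸ card_pos.mpr ((X.nonempty_of_mem σ hσ).mono hsub)
  exact ⟨τ, mem_simps.mpr ⟨hτ, by omega⟩, hsub⟩

lemma IsPureOfRank.lk {X : SComplex V} {n : ℕ} (h : X.IsPureOfRank n) (hn : 2 ≤ n) {u : V}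
    (hu : {u} ∈ X.faces) : (X.lk {u}).IsPureOfRank (n - 1) := by
  have lift : ∀ τ ∈ X.faces, u ∈ τ → τ.card = n → τ.erase u ∈ (X.lk {u}).faces :=
    fun τ hτ huτ hcard => erase_mem_lk hτ huτ (card_pos.mp (by rw [card_erase_of_mem huτ]; omega))
  refine ⟨?_, fun η hη => ?_⟩
  · obtain ⟨τ, hτ, hsub, hcard⟩ := h.2 {u} hu
    exact ⟨_, lift τ hτ (hsub (mem_singleton_self u)) hcard⟩
  · obtain ⟨-, hηu, huη⟩ := mem_lk_singleton.mp hη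
    obtain ⟨τ, hτ, hsub, hcard⟩ := h.2 _ hηu
    have huτ : u ∈ τ := hsub (mem_insert_self u η)
    refine ⟨τ.erase u, lift τ hτ huτ hcard, ?_, by rw [card_erase_of_mem huτ, hcard]⟩
    exact subset_erase.mpr ⟨(subset_insert u η).trans hsub, huη⟩

lemma card_lk_top_superset {X : SComplex V} {n : ℕ} (hn : 2 ≤ n) {u : V} {σ : Finset V}
    (hu : u ∉ σ) :
    (((X.lk {u}).simps (n - 2)).filter (σ ⊆ ·)).card =
      ((X.simps (n - 1)).filter (insert u σ ⊆ ·)).card := by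
  refine card_bij (fun η _ => insert u η) (fun η hη => ?_) (fun η₁ hη₁ η₂ hη₂ heq => ?_)
    (fun τ hτ => ?_)
  · obtain ⟨hη, hσ⟩ := mem_filter.mp hη
    obtain ⟨hηlk, hcard⟩ := mem_simps.mp hη
    obtain ⟨-, hηu, huη⟩ := mem_lk_singleton.mp hηlk
    refine mem_filter.mpr ⟨mem_simps.mpr ⟨hηu, ?_⟩, insert_subset_insert u hσ⟩
    rw [card_insert_of_notMem huη, hcard]
    omega
  · have hu₁ := (mem_lk_singleton.mp (mem_simps.mp (mem_filter.mp hη₁).1).1).2.2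
    have hu₂ := (mem_lk_singleton.mp (mem_simps.mp (mem_filter.mp hη₂).1).1).2.2
    rw [← erase_insert hu₁, ← erase_insert hu₂, heq]
  · obtain ⟨hτ, hsub⟩ := mem_filter.mp hτ
    obtain ⟨hτ, hcard⟩ := mem_simps.mp hτ
    have huτ : u ∈ τ := hsub (mem_insert_self u σ)
    refine ⟨τ.erase u, mem_filter.mpr ⟨mem_simps.mpr ⟨erase_mem_lk hτ huτ ?_, ?_⟩, ?_⟩,
      insert_erase huτ⟩
    · exact card_pos.mp (by rw [card_erase_of_mem huτ]; omega)
    · rw [card_erase_of_mem huτ]; omega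
    · exact subset_erase.mpr ⟨(subset_insert u σ).trans hsub, hu⟩

lemma weight_mul_weight_lk {X : SComplex V} {n : ℕ} (h : X.IsPureOfRank n) {τ : Finset V}
    (hτ : τ ∈ X.simps 2) {u : V} (hu : u ∈ τ) :
    X.weight {u} * (X.lk {u}).weight (τ.erase u) = X.weight τ / 3 := by
  obtain ⟨hτX, hτcard⟩ := mem_simps.mp hτ
  rw [show 2 + 1 = 3 from rfl] at hτcard
  have hn : 3 ≤ n := by
    obtain ⟨τ', hτ', hsub, hcard⟩ := h.2 τ hτX
    have := card_le_card hsub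
    omega
  have huX := singleton_mem_faces hτX hu
  have hsupp : ((X.lk {u}).simps (n - 2)).card = ((X.simps (n - 1)).filter ({u} ⊆ ·)).card := by
    simpa using card_lk_top_superset (X := X) (by omega) (notMem_empty u)
  have hsuppτ : (((X.lk {u}).simps (n - 2)).filter (τ.erase u ⊆ ·)).card =
      ((X.simps (n - 1)).filter (τ ⊆ ·)).card := by
    simpa [insert_erase hu] using card_lk_top_superset (X := X) (by omega) (notMem_erase u τ)
  have hpos : 0 < ((X.simps (n - 1)).filter ({u} ⊆ ·)).card := by
    obtain ⟨τ', hτ', hsub⟩ := h.exists_top_superset huX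
    exact card_pos.mpr ⟨τ', mem_filter.mpr ⟨hτ', hsub⟩⟩
  have hchoose : (n : ℝ) * (n - 1).choose 2 = n.choose 3 * 3 := by
    have := Nat.add_one_mul_choose_eq (n - 1) 2
    rw [Nat.sub_add_cancel (by omega : 1 ≤ n)] at this
    exact_mod_cast this
  have hf : ((X.simps (n - 1)).card : ℝ) ≠ 0 := by
    exact_mod_cast (hpos.trans_le (card_filter_le _ _)).ne'
  have hc₂ : ((n - 1).choose 2 : ℝ) ≠ 0 := by exact_mod_cast (Nat.choose_pos (by omega)).ne'
  have hc₃ : (n.choose 3 : ℝ) ≠ 0 := by exact_mod_cast (Nat.choose_pos hn).ne'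
  unfold weight
  rw [h.rank_eq, (h.lk (by omega) huX).rank_eq, show n - 1 - 1 = n - 2 by omega, hsupp, hsuppτ,
    card_erase_of_mem hu, hτcard, card_singleton, Nat.choose_one_right, show 3 - 1 = 2 from rfl]
  -- both sides count the top faces through `τ`, and `n · C(n-1, 2) = 3 · C(n, 3)`
  field_simp
  linear_combination -(((X.simps (n - 1)).filter (τ ⊆ ·)).card : ℝ) * hchoose

end SComplex

section Cochains

variable {G : Type*} [Group G]

lemma d1_rotate_ne_one {α : Type*} {φ : α → α → G} {a b c : α} (h : d1 φ a b c ≠ 1) :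
    d1 φ b c a ≠ 1 := by
  intro h'
  apply h
  calc d1 φ a b c = φ a b * d1 φ b c a * (φ a b)⁻¹ := by unfold d1; group
    _ = 1 := by rw [h']; group

lemma exists_d1_ne_one_of_mem {φ : V → V → G} {a b c u : V} (h : d1 φ a b c ≠ 1)
    (hu : u ∈ ({a, b, c} : Finset V)) :
    ∃ v w : V, ({a, b, c} : Finset V) = {u, v, w} ∧ d1 φ u v w ≠ 1 := by
  simp only [mem_insert, mem_singleton] at hu
  rcases hu with rfl | rfl | rfl
  · exact ⟨b, c, rfl, h⟩
  · exact ⟨c, a, by ext; simp only [mem_insert, mem_singleton]; tauto, d1_rotate_ne_one h⟩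
  · exact ⟨a, b, by ext; simp only [mem_insert, mem_singleton]; tauto,
      d1_rotate_ne_one (d1_rotate_ne_one h)⟩

lemma isCocycle_one (X : SComplex V) : IsCocycle X (fun _ _ => (1 : G)) :=
  ⟨fun _ _ => inv_one.symm, fun _ _ _ _ => by simp [d1]⟩

lemma normD1_nonneg (X : SComplex V) (φ : V → V → G) : 0 ≤ normD1 X φ :=
  sum_nonneg fun τ _ => X.weight_nonneg τ

lemma dist1_nonneg (X : SComplex V) (φ ψ : V → V → G) : 0 ≤ dist1 X φ ψ :=
  sum_nonneg fun e _ => X.weight_nonneg e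

lemma dist1_self (X : SComplex V) (φ : V → V → G) : dist1 X φ φ = 0 := by
  simp [dist1, norm1]

lemma bddBelow_dist1_cocycles (X : SComplex V) (φ : V → V → G) :
    BddBelow {d : ℝ | ∃ ψ : V → V → G, IsCocycle X ψ ∧ d = dist1 X φ ψ} :=
  ⟨0, by rintro _ ⟨ψ, -, rfl⟩; exact dist1_nonneg X φ ψ⟩

lemma csyNorm_le_dist1 (X : SComplex V) (φ : V → V → G) {ψ : V → V → G}
    (hψ : IsCocycle X ψ) : csyNorm X φ ≤ dist1 X φ ψ :=
  csInf_le (bddBelow_dist1_cocycles X φ) ⟨ψ, hψ, rfl⟩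

lemma csyNorm_nonneg (X : SComplex V) (φ : V → V → G) : 0 ≤ csyNorm X φ :=
  le_csInf ⟨_, _, isCocycle_one X, rfl⟩ fun _ ⟨ψ, _, hd⟩ => hd ▸ dist1_nonneg X φ ψ

/-- The infimum defining `‖φ‖_csy` is attained, since `dist(φ,·)` only takes the finitely many
values `∑_{e ∈ T} c_X(e)`, `T ⊆ X(1)`. -/
lemma exists_isCocycle_dist1_eq_csyNorm (X : SComplex V) (φ : V → V → G) :
    ∃ ψ : V → V → G, IsCocycle X ψ ∧ dist1 X φ ψ = csyNorm X φ := by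
  classical
  have hfin : {d : ℝ | ∃ ψ : V → V → G, IsCocycle X ψ ∧ d = dist1 X φ ψ}.Finite := by
    refine ((X.simps 1).powerset.image (∑ e ∈ ·, X.weight e)).finite_toSet.subset ?_
    rintro _ ⟨ψ, -, rfl⟩
    exact mem_image.mpr ⟨_, mem_powerset.mpr (filter_subset
      (fun e => ∃ u v, e = {u, v} ∧ φ u v * (ψ u v)⁻¹ ≠ 1) _), by simp only [dist1, norm1]⟩
  obtain ⟨ψ, hψ, hd⟩ := Set.Nonempty.csInf_mem (by exact ⟨_, _, isCocycle_one X, rfl⟩) hfin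
  exact ⟨ψ, hψ, hd.symm⟩

lemma h1_mul_csyNorm_le_normD1 (X : SComplex V) {φ : V → V → G} (hφ : IsCochain G φ) :
    h1 X G * csyNorm X φ ≤ normD1 X φ := by
  rcases (csyNorm_nonneg X φ).eq_or_lt with hzero | hpos
  · rw [← hzero, mul_zero]
    exact normD1_nonneg X φ
  have hcoc : ¬ IsCocycle X φ := fun hcoc =>
    ((csyNorm_le_dist1 X φ hcoc).trans_eq (dist1_self X φ)).not_gt hpos
  have hbdd : BddBelow {r : ℝ | ∃ χ : V → V → G, IsCochain G χ ∧ ¬ IsCocycle X χ ∧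
      r = normD1 X χ / csyNorm X χ} :=
    ⟨0, by rintro _ ⟨χ, -, -, rfl⟩; exact div_nonneg (normD1_nonneg X χ) (csyNorm_nonneg X χ)⟩
  exact (le_div_iff₀ hpos).mp (csInf_le hbdd ⟨φ, hφ, hcoc, rfl⟩)

end Cochains

lemma ne_of_card_eq_three {u v w : V} (h : ({u, v, w} : Finset V).card = 3) :
    u ≠ v ∧ u ≠ w ∧ v ≠ w := by
  have hpair : ∀ a b : V, ({a, b} : Finset V).card ≠ 3 := fun a b h =>
    absurd h (card_le_two.trans_lt (by norm_num)).ne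
  refine ⟨?_, ?_, ?_⟩ <;> rintro rfl
  · exact hpair u w (by simpa using h)
  · exact hpair v u (by rw [insert_comm] at h; simpa using h)
  · exact hpair u v (by simpa using h)

section Ycomplex

variable [Fintype V] {G : Type*} [Group G] {S : Type*} [Fintype S] [DecidableEq S]
  [MulAction G S] {X : SComplex V} {φ : V → V → G}

lemma mem_Ycomplex_faces {σ : Finset (V × S)} :
    σ ∈ (Ycomplex X φ S).faces ↔ σ.image Prod.fst ∈ X.faces ∧
      (σ.image Prod.fst).card = σ.card ∧
      ∀ p ∈ σ, ∀ q ∈ σ, p.1 ≠ q.1 → p.2 = φ p.1 q.1 • q.2 := by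
  simp [Ycomplex]

lemma mem_Ycomplex_verts {p : V × S} : p ∈ (Ycomplex X φ S).verts ↔ {p.1} ∈ X.faces := by
  simp [SComplex.mem_verts, mem_Ycomplex_faces]

lemma deficiency_Ycomplex :
    deficiency (Ycomplex X φ S) X Prod.fst = ∑ u ∈ X.verts,
      X.weight {u} / Fintype.card S * ∑ s : S, locDef (Ycomplex X φ S) X Prod.fst (u, s) := by
  unfold deficiency
  refine sum_congr rfl fun u hu => ?_
  have hfiber : (Ycomplex X φ S).verts.filter (fun p => p.1 = u) = {u} ×ˢ univ := by
    ext ⟨v, s⟩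
    simp only [mem_filter, mem_Ycomplex_verts, mem_product, mem_singleton, mem_univ, and_true]
    exact ⟨And.right, fun h => ⟨h ▸ SComplex.mem_verts.mp hu, h⟩⟩
  rw [hfiber, card_product, card_singleton, one_mul, card_univ, sum_product, sum_singleton]

lemma triangle_mem_Ycomplex (hφ : IsCochain G φ) {u v w : V} (hX : {u, v, w} ∈ X.faces)
    (huv : u ≠ v) (huw : u ≠ w) (hvw : v ≠ w) {s : S} (hfix : d1 φ u v w • s = s) :
    {(u, s), (v, φ v u • s), (w, φ w u • s)} ∈ (Ycomplex X φ S).faces := by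
  have hvw' : φ v u • s = φ v w • φ w u • s := by
    rw [smul_smul, hφ v u, inv_smul_eq_iff, smul_smul, ← mul_assoc]
    exact hfix.symm
  have hwv' : φ w u • s = φ w v • φ v u • s := by
    rw [hvw', hφ w v, inv_smul_smul]
  have himage : ({(u, s), (v, φ v u • s), (w, φ w u • s)} : Finset (V × S)).image Prod.fst =
      {u, v, w} := by
    simp [image_insert]
  refine mem_Ycomplex_faces.mpr ⟨himage ▸ hX, ?_, fun p hp q hq hpq => ?_⟩
  · rw [himage, card_insert_of_notMem (by simp [huv, huw]), card_pair hvw,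
      card_insert_of_notMem (by simp [huv, huw]), card_pair (by simp [hvw])]
  · simp only [mem_insert, mem_singleton] at hp hq
    rcases hp with rfl | rfl | rfl <;> rcases hq with rfl | rfl | rfl <;>
      first
      | exact absurd rfl hpq
      | rfl
      | exact hvw'
      | exact hwv'
      | exact (by rw [hφ u v, inv_smul_smul] : s = φ u v • φ v u • s)
      | exact (by rw [hφ u w, inv_smul_smul] : s = φ u w • φ w u • s)

lemma exists_lk_Ycomplex_image_eq_iff (hφ : IsCochain G φ) {u v w : V}
    (hX : {u, v, w} ∈ X.faces) (huv : u ≠ v) (huw : u ≠ w) (hvw : v ≠ w) (s : S) :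
    (∃ η ∈ ((Ycomplex X φ S).lk {(u, s)}).faces, η.image Prod.fst = {v, w}) ↔
      d1 φ u v w • s = s := by
  constructor
  · rintro ⟨η, hη, himage⟩
    obtain ⟨-, hηY, -⟩ := SComplex.mem_lk_singleton.mp hη
    have hcompat := (mem_Ycomplex_faces.mp hηY).2.2
    obtain ⟨p, hp, rfl⟩ : ∃ p ∈ η, p.1 = v := by simpa using himage.ge (mem_insert_self v {w})
    obtain ⟨q, hq, rfl⟩ : ∃ q ∈ η, q.1 = w := by simpa using himage.ge (by simp)
    have hus : (u, s) ∈ insert (u, s) η := mem_insert_self _ _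
    have h₁ := hcompat _ hus p (mem_insert_of_mem hp) huv
    have h₂ := hcompat p (mem_insert_of_mem hp) q (mem_insert_of_mem hq) hvw
    have h₃ := hcompat q (mem_insert_of_mem hq) _ hus huw.symm
    simp only at h₁ h₃
    rw [d1, mul_smul, mul_smul, ← h₃, ← h₂, ← h₁]
  · intro hfix
    have hlift := triangle_mem_Ycomplex hφ hX huv huw hvw hfix
    refine ⟨{(v, φ v u • s), (w, φ w u • s)}, SComplex.mem_lk_singleton.mpr
      ⟨(Ycomplex X φ S).down_closed _ hlift _ (subset_insert _ _) (insert_nonempty _ _), hlift,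
        by simp [huv, huw]⟩, by simp [image_insert]⟩

lemma mem_Dset_Ycomplex_iff (hφ : IsCochain G φ) {u v w : V} (hτ : {u, v, w} ∈ X.simps 2)
    (s : S) : {v, w} ∈ Dset (Ycomplex X φ S) X Prod.fst (u, s) ↔ d1 φ u v w • s ≠ s := by
  obtain ⟨hX, hcard⟩ := SComplex.mem_simps.mp hτ
  obtain ⟨huv, huw, hvw⟩ := ne_of_card_eq_three hcard
  have hedge : {v, w} ∈ (X.lk {u}).simps 1 :=
    SComplex.mem_simps.mpr ⟨SComplex.mem_lk_singleton.mpr ⟨X.down_closed _ hX _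
      (subset_insert _ _) (insert_nonempty _ _), hX, by simp [huv, huw]⟩, card_pair hvw⟩
  rw [Dset, mem_filter, exists_lk_Ycomplex_image_eq_iff hφ hX huv huw hvw]
  exact and_iff_right hedge

end Ycomplex

section FixCount

variable {G : Type*} [Group G] {S : Type*} [Fintype S] [MulAction G S]

lemma fixCard_le_FixG {g : G} (hg : g ≠ 1) : fixCard G S g ≤ FixG G S :=
  le_csSup ⟨Fintype.card S, by rintro _ ⟨g', -, rfl⟩; exact card_le_univ _⟩ ⟨g, hg, rfl⟩

lemma card_le_FixG_add_card_moved [DecidableEq S] {g : G} (hg : g ≠ 1) :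
    Fintype.card S ≤ FixG G S + #{s : S | g • s ≠ s} := by
  have hfix : #{s : S | g • s = s} ≤ FixG G S := by
    have h := fixCard_le_FixG (S := S) hg
    rw [fixCard] at h
    convert h
  have := card_filter_add_card_filter_not (s := (univ : Finset S)) (fun s => g • s = s)
  rw [card_univ] at this
  simp only [ne_eq]
  omega

end FixCount

open Classical in
noncomputable def supportD1 {G : Type*} [Group G] (X : SComplex V) (φ : V → V → G) :
    Finset (Finset V) :=
  (X.simps 2).filter fun τ => ∃ u v w : V, τ = {u, v, w} ∧ d1 φ u v w ≠ 1

section SupportD1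

variable {G : Type*} [Group G] {X : SComplex V} {φ : V → V → G}

open Classical in
lemma mem_supportD1 {τ : Finset V} :
    τ ∈ supportD1 X φ ↔ τ ∈ X.simps 2 ∧ ∃ u v w : V, τ = {u, v, w} ∧ d1 φ u v w ≠ 1 :=
  mem_filter

lemma supportD1_subset : supportD1 X φ ⊆ X.simps 2 :=
  fun _ hτ => (mem_supportD1.mp hτ).1

lemma normD1_eq_sum_supportD1 : normD1 X φ = ∑ τ ∈ supportD1 X φ, X.weight τ :=
  rfl

end SupportD1

section Deficiency

variable {X : SComplex V}

lemma sum_weight_erase_le_locDef {W : Type*} [DecidableEq W] (Y : SComplex W)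
    (f : W → V) (w : W) (T : Finset (Finset V)) (hT : ∀ τ ∈ T, f w ∈ τ) :
    ∑ τ ∈ T with τ.erase (f w) ∈ Dset Y X f w, (X.lk {f w}).weight (τ.erase (f w)) ≤
      locDef Y X f w := by
  have hinj : Set.InjOn (fun τ : Finset V => τ.erase (f w)) T := fun τ₁ h₁ τ₂ h₂ heq => by
    rw [← insert_erase (hT τ₁ h₁), ← insert_erase (hT τ₂ h₂)]
    exact congrArg (insert (f w)) heq
  rw [← sum_image (hinj.mono fun τ hτ => (mem_filter.mp hτ).1)]
  refine sum_le_sum_of_subset_of_nonneg ?_ fun e _ _ => (X.lk {f w}).weight_nonneg e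
  intro e he
  obtain ⟨τ, hτ, rfl⟩ := mem_image.mp he
  exact (mem_filter.mp hτ).2

variable {G : Type*} [Group G] {S : Type*} [Fintype S] [DecidableEq S] [MulAction G S]

lemma sum_card_mul_weight_le_sum_locDef (Y : SComplex (V × S)) (u : V)
    (T : Finset (Finset V)) (hT : ∀ τ ∈ T, u ∈ τ) :
    ∑ τ ∈ T, (#{s : S | τ.erase u ∈ Dset Y X Prod.fst (u, s)} : ℝ) *
        (X.lk {u}).weight (τ.erase u) ≤ ∑ s : S, locDef Y X Prod.fst (u, s) := by
  calc _ = ∑ s : S, ∑ τ ∈ T with τ.erase u ∈ Dset Y X Prod.fst (u, s),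
        (X.lk {u}).weight (τ.erase u) := by
        simp only [natCast_card_filter, sum_mul, ite_mul, one_mul, zero_mul, sum_filter]
        exact sum_comm
    _ ≤ _ := sum_le_sum fun s _ => sum_weight_erase_le_locDef Y Prod.fst (u, s) T hT

variable [Fintype V]

lemma card_sub_FixG_le_card_Dset {φ : V → V → G} (hφ : IsCochain G φ) {τ : Finset V}
    (hτ : τ ∈ supportD1 X φ) {u : V} (hu : u ∈ τ) :
    (Fintype.card S : ℝ) - FixG G S ≤
      #{s : S | τ.erase u ∈ Dset (Ycomplex X φ S) X Prod.fst (u, s)} := by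
  obtain ⟨hτ2, a, b, c, rfl, hd⟩ := mem_supportD1.mp hτ
  obtain ⟨v, w, hτ, hd⟩ := exists_d1_ne_one_of_mem hd hu
  rw [hτ] at hτ2 ⊢
  have huvw := ne_of_card_eq_three (SComplex.mem_simps.mp hτ2).2
  rw [erase_insert (by simp [huvw.1, huvw.2.1])]
  simp_rw [mem_Dset_Ycomplex_iff hφ hτ2]
  have := card_le_FixG_add_card_moved (S := S) hd
  rw [sub_le_iff_le_add']
  exact_mod_cast this

lemma sub_FixG_mul_sum_weight_lk_le {φ : V → V → G} (hφ : IsCochain G φ) (u : V) :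
    ((Fintype.card S : ℝ) - FixG G S) *
        ∑ τ ∈ supportD1 X φ with u ∈ τ, (X.lk {u}).weight (τ.erase u) ≤
      ∑ s : S, locDef (Ycomplex X φ S) X Prod.fst (u, s) := by
  rw [mul_sum]
  refine (sum_le_sum fun τ hτ => mul_le_mul_of_nonneg_right
    (card_sub_FixG_le_card_Dset hφ (mem_filter.mp hτ).1 (mem_filter.mp hτ).2)
    ((X.lk {u}).weight_nonneg _)).trans ?_
  exact sum_card_mul_weight_le_sum_locDef _ u _ fun τ hτ => (mem_filter.mp hτ).2

lemma sum_verts_sum_weight_mul_weight_lk {n : ℕ} (hpure : X.IsPureOfRank n)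
    {B : Finset (Finset V)} (hB : B ⊆ X.simps 2) :
    ∑ u ∈ X.verts, ∑ τ ∈ B with u ∈ τ, X.weight {u} * (X.lk {u}).weight (τ.erase u) =
      ∑ τ ∈ B, X.weight τ := by
  calc _ = ∑ u ∈ X.verts, ∑ τ ∈ B, if u ∈ τ then X.weight τ / 3 else 0 := by
        refine sum_congr rfl fun u _ => ?_
        rw [sum_filter]
        exact sum_congr rfl fun τ hτ => if_ctx_congr Iff.rfl
          (fun hu => X.weight_mul_weight_lk hpure (hB hτ) hu) fun _ => rfl
    _ = ∑ τ ∈ B, ∑ u ∈ X.verts with u ∈ τ, X.weight τ / 3 := by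
        rw [sum_comm]
        exact sum_congr rfl fun τ _ => (sum_filter _ _).symm
    _ = ∑ τ ∈ B, X.weight τ := by
        refine sum_congr rfl fun τ hτ => ?_
        obtain ⟨hτX, hcard⟩ := SComplex.mem_simps.mp (hB hτ)
        have hverts : {u ∈ X.verts | u ∈ τ} = τ := by
          rw [filter_mem_eq_inter, inter_eq_right]
          exact fun u hu => SComplex.mem_verts.mpr (SComplex.singleton_mem_faces hτX hu)
        rw [hverts, sum_const, hcard, nsmul_eq_mul]
        ring

lemma mul_normD1_le_deficiency [Nonempty S] {n : ℕ} (hpure : X.IsPureOfRank n)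
    {φ : V → V → G} (hφ : IsCochain G φ) :
    (1 - (FixG G S : ℝ) / Fintype.card S) * normD1 X φ ≤
      deficiency (Ycomplex X φ S) X Prod.fst := by
  have hm : (Fintype.card S : ℝ) ≠ 0 := by exact_mod_cast Fintype.card_ne_zero
  rw [deficiency_Ycomplex, normD1_eq_sum_supportD1,
    ← sum_verts_sum_weight_mul_weight_lk hpure supportD1_subset, mul_sum]
  refine sum_le_sum fun u _ => ?_
  calc _ = X.weight {u} / Fintype.card S * (((Fintype.card S : ℝ) - FixG G S) *
        ∑ τ ∈ supportD1 X φ with u ∈ τ, (X.lk {u}).weight (τ.erase u)) := by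
        rw [mul_sum, mul_sum, mul_sum]
        refine sum_congr rfl fun τ _ => ?_
        field_simp
    _ ≤ _ := mul_le_mul_of_nonneg_left (sub_FixG_mul_sum_weight_lk_le hφ u)
        (div_nonneg (X.weight_nonneg _) (Nat.cast_nonneg _))

end Deficiency

theorem near_cocycle_of_near_cover_general
    {V : Type*} [Fintype V] [DecidableEq V]
    {G : Type*} [Group G] {S : Type*} [Fintype S] [DecidableEq S]
    [MulAction G S]
    (X : SComplex V) (n : ℕ) (hpure : X.IsPureOfRank n)
    (hfaithful : FixG G S < Fintype.card S)
    (hh1 : 0 < h1 X G)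
    (φ : V → V → G) (hφ : IsCochain G φ) :
    ∃ ψ : V → V → G, IsCocycle X ψ ∧
      dist1 X φ ψ ≤ deficiency (Ycomplex X φ S) X Prod.fst /
        ((1 - (FixG G S : ℝ) / Fintype.card S) * h1 X G) := by
  have hS : 0 < Fintype.card S := (Nat.zero_le _).trans_lt hfaithful
  have : Nonempty S := Fintype.card_pos_iff.mp hS
  have hc : 0 < 1 - (FixG G S : ℝ) / Fintype.card S := by
    rw [sub_pos, div_lt_one (by exact_mod_cast hS)]
    exact_mod_cast hfaithful
  obtain ⟨ψ, hψ, hdist⟩ := exists_isCocycle_dist1_eq_csyNorm X φ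
  refine ⟨ψ, hψ, ?_⟩
  rw [hdist, le_div_iff₀ (mul_pos hc hh1)]
  calc csyNorm X φ * ((1 - (FixG G S : ℝ) / Fintype.card S) * h1 X G)
      = (1 - (FixG G S : ℝ) / Fintype.card S) * (h1 X G * csyNorm X φ) := by ring
    _ ≤ (1 - (FixG G S : ℝ) / Fintype.card S) * normD1 X φ :=
        mul_le_mul_of_nonneg_left (h1_mul_csyNorm_le_normD1 X hφ) hc.le
    _ ≤ deficiency (Ycomplex X φ S) X Prod.fst := mul_normD1_le_deficiency (S := S) hpure hφ

/-- Theorem 2.3. If `G` acts on a finite nonempty set `S` with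
`Fix_G(S) < |S|`, `C¹∖Z¹` is nonempty and `h₁(X;G) > 0`, then every `φ ∈ C¹(X;G)` has a
cocycle `ψ` with `dist(φ,ψ) ≤ m(Y_φ) / ((1 - Fix_G(S)/|S|)·h₁(X;G))`. -/
theorem near_cocycle_of_near_cover
    {V : Type*} [Fintype V] [DecidableEq V]
    {G : Type*} [Group G] {S : Type*} [Fintype S] [DecidableEq S] [Nonempty S]
    [MulAction G S]
    (X : SComplex V) (n : ℕ) (hn : 3 ≤ n) (hpure : X.IsPureOfRank n)
    (hfaithful : FixG G S < Fintype.card S)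
    (hne : ∃ φ₀ : V → V → G, IsCochain G φ₀ ∧ ¬ IsCocycle X φ₀)
    (hh1 : 0 < h1 X G)
    (φ : V → V → G) (hφ : IsCochain G φ) :
    ∃ ψ : V → V → G, IsCocycle X ψ ∧
      dist1 X φ ψ ≤ deficiency (Ycomplex X φ S) X Prod.fst /
        ((1 - (FixG G S : ℝ) / Fintype.card S) * h1 X G) :=
  near_cocycle_of_near_cover_general X n hpure hfaithful hh1 φ hφ
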